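/- Search bound consequence: if there exists a cycle of the shortcut Collatz map f of length k ≥ 2 among positive odd integers, then there exists a positive odd integer a < k·3^{k−1} with f^k(a) = a and f^i(a) ≠ a for 0 < i < k. -/

import Mathlib

/-!
Let `m` be the least element of the cycle `a₀ = m, a₁, …, a_{k-1}` and `N = n₁ + ⋯ + n_k`.
Multiplying the relations `2 ^ nᵢ aᵢ₊₁ = 3 aᵢ + 1` around the cycle gives
`2 ^ N = ∏ (3 + 1 / aᵢ)`, hence `3 ^ k < 2 ^ N ≤ (3 + 1 / m) ^ k`. For `k ≥ 2` the number
`3 ^ k + 1` is not a power of two (it is `2` or `4` mod `8`), so even `3 ^ k + 2 ≤ 2 ^ N`.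
The Bernoulli-type bound `(x + 1) ^ k (x - k) ≤ x ^ (k + 1)` at `x = 3m` then shows that
`(1 + 1 / (3m)) ^ k ≥ 1 + 2 / 3 ^ k` is impossible once `m ≥ k 3 ^ (k - 1)`.
-/

/-- Shortcut Collatz map on odd integers: f(a) = (3a+1)/2^(v2(3a+1)). -/
def collatzOdd (a : ℤ) : ℤ := (3 * a + 1) / 2 ^ ((3 * a + 1).natAbs.factorization 2)

/-- n (a) i = v2(3 * f^[i](a) + 1), i.e. the exponent n_{i+1} in the paper. -/
def collatzExp (a : ℤ) (i : ℕ) : ℕ :=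
  (3 * collatzOdd^[i] a + 1).natAbs.factorization 2

namespace Function

variable {α : Type*} {f : α → α} {x : α} {n : ℕ}

theorem minimalPeriod_eq_iff_of_pos (hn : 0 < n) :
    minimalPeriod f x = n ↔ IsPeriodicPt f n x ∧ ∀ i, 0 < i → i < n → ¬IsPeriodicPt f i x := by
  refine ⟨fun h ↦ ?_, fun ⟨hx, hmin⟩ ↦ (hx.minimalPeriod_le hn).antisymm ?_⟩
  · subst h
    exact ⟨isPeriodicPt_minimalPeriod f x,
      fun i hi hlt ↦ not_isPeriodicPt_of_pos_of_lt_minimalPeriod hi.ne' hlt⟩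
  · by_contra! hlt
    exact hmin _ (hx.minimalPeriod_pos hn) hlt (isPeriodicPt_minimalPeriod f x)

theorem IsPeriodicPt.exists_iterate_le [LinearOrder α] (hx : IsPeriodicPt f n x) (hn : 0 < n) :
    ∃ j, ∀ i, f^[j] x ≤ f^[i] x := by
  obtain ⟨j, -, hj⟩ := Finset.exists_min_image (Finset.range n) (fun i ↦ f^[i] x)
    ⟨0, Finset.mem_range.mpr hn⟩
  exact ⟨j, fun i ↦ hx.iterate_mod_apply i ▸ hj _ (Finset.mem_range.mpr (Nat.mod_lt i hn))⟩

end Function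

theorem Finset.prod_range_succ_eq_of_apply_eq {M : Type*} [CommMonoid M] {g : ℕ → M} {n : ℕ}
    (h : g n = g 0) : ∏ i ∈ range n, g (i + 1) = ∏ i ∈ range n, g i := by
  cases n with
  | zero => simp
  | succ n => rw [prod_range_succ, h, ← prod_range_succ']

theorem Nat.three_pow_add_one_ne_two_pow {k : ℕ} (hk : 2 ≤ k) (n : ℕ) : 3 ^ k + 1 ≠ 2 ^ n := by
  intro h
  have h9 : 3 ^ 2 ≤ 3 ^ k := Nat.pow_le_pow_right (by norm_num) hk
  have hn : 3 ≤ n := by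
    by_contra! hn
    have : 2 ^ n ≤ 2 ^ 2 := Nat.pow_le_pow_right (by norm_num) (by omega)
    omega
  have h8 : 2 ^ 3 ∣ 2 ^ n := Nat.pow_dvd_pow 2 hn
  have hmod : 3 ^ k % 8 = 1 ∨ 3 ^ k % 8 = 3 := by
    obtain ⟨t, rfl | rfl⟩ := Nat.even_or_odd' k
    · left; rw [pow_mul, Nat.pow_mod]; norm_num
    · right; rw [pow_succ, pow_mul, Nat.mul_mod, Nat.pow_mod]; norm_num
  omega

section

variable {R : Type*} [CommRing R] [LinearOrder R] [IsStrictOrderedRing R]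

theorem add_one_pow_mul_sub_le_pow {x : R} (hx : 0 ≤ x) (k : ℕ) :
    (x + 1) ^ k * (x - k) ≤ x ^ (k + 1) := by
  induction k with
  | zero => simp
  | succ k ih =>
    calc (x + 1) ^ (k + 1) * (x - (k + 1 : ℕ))
        = (x + 1) ^ k * ((x + 1) * (x - k) - (x + 1)) := by push_cast; ring
      _ ≤ (x + 1) ^ k * (x * (x - k)) := by gcongr; nlinarith
      _ = x * ((x + 1) ^ k * (x - k)) := by ring
      _ ≤ x * x ^ (k + 1) := by gcongr
      _ = x ^ (k + 1 + 1) := by ring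

theorem lt_mul_three_pow_of_pow_mul_le {m : R} (hm : 0 < m) {k : ℕ}
    (h : m ^ k * (3 ^ k + 2) ≤ (3 * m + 1) ^ k) : m < k * 3 ^ (k - 1) := by
  obtain _ | j := k
  · norm_num at h
  by_contra! hge
  push_cast at hge h ⊢
  have h3 : (1 : R) ≤ 3 ^ j := one_le_pow₀ (by norm_num)
  have hsub : 0 ≤ 3 * m - (j + 1) := by nlinarith
  have key : m ^ (j + 1) * ((3 ^ (j + 1) + 2) * (3 * m - (j + 1))) ≤
      m ^ (j + 1) * (3 ^ (j + 1) * (3 * m)) :=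
    calc m ^ (j + 1) * ((3 ^ (j + 1) + 2) * (3 * m - (j + 1)))
        = m ^ (j + 1) * (3 ^ (j + 1) + 2) * (3 * m - (j + 1)) := by ring
      _ ≤ (3 * m + 1) ^ (j + 1) * (3 * m - (j + 1)) := by gcongr
      _ ≤ (3 * m) ^ (j + 1 + 1) := by
          simpa using add_one_pow_mul_sub_le_pow (x := 3 * m) (by positivity) (j + 1)
      _ = m ^ (j + 1) * (3 ^ (j + 1) * (3 * m)) := by ring
  have := le_of_mul_le_mul_left key (by positivity)
  rw [pow_succ] at this
  nlinarith

end

open Finset Function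

theorem two_pow_mul_collatzOdd (a : ℤ) :
    2 ^ (3 * a + 1).natAbs.factorization 2 * collatzOdd a = 3 * a + 1 := by
  have h : ((2 ^ (3 * a + 1).natAbs.factorization 2 : ℕ) : ℤ) ∣ 3 * a + 1 :=
    Int.natCast_dvd.mpr (Nat.ordProj_dvd _ 2)
  push_cast at h
  exact Int.mul_ediv_cancel' h

theorem odd_collatzOdd (a : ℤ) : Odd (collatzOdd a) := by
  have hne : (3 * a + 1).natAbs ≠ 0 := by omega
  rw [← Int.not_even_iff_odd, even_iff_two_dvd]
  rintro ⟨c, hc⟩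
  apply Nat.pow_succ_factorization_not_dvd hne Nat.prime_two
  have h := two_pow_mul_collatzOdd a
  rw [hc] at h
  exact Int.natCast_dvd.mp ⟨c, by push_cast; linear_combination -h⟩

theorem collatzOdd_pos {a : ℤ} (ha : 0 ≤ a) : 0 < collatzOdd a := by
  refine pos_of_mul_pos_right ?_ (pow_nonneg zero_le_two ((3 * a + 1).natAbs.factorization 2))
  rw [two_pow_mul_collatzOdd]
  omega

theorem iterate_collatzOdd_pos {a : ℤ} (ha : 0 < a) (i : ℕ) : 0 < collatzOdd^[i] a :=
  Iterate.rec (0 < ·) ha (fun _ hb ↦ collatzOdd_pos hb.le) i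

theorem two_pow_collatzExp_mul (a : ℤ) (i : ℕ) :
    2 ^ collatzExp a i * collatzOdd^[i + 1] a = 3 * collatzOdd^[i] a + 1 := by
  rw [iterate_succ_apply', collatzExp, two_pow_mul_collatzOdd]

section Cycle

variable {m : ℤ} {k : ℕ}

theorem two_pow_sum_collatzExp_mul_prod (hcyc : IsPeriodicPt collatzOdd k m) :
    2 ^ (∑ i ∈ range k, collatzExp m i) * ∏ i ∈ range k, collatzOdd^[i] m =
      ∏ i ∈ range k, (3 * collatzOdd^[i] m + 1) := by
  rw [← prod_range_succ_eq_of_apply_eq (g := (collatzOdd^[·] m)) hcyc.eq, ← prod_pow_eq_pow_sum,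
    ← prod_mul_distrib]
  exact prod_congr rfl fun i _ ↦ two_pow_collatzExp_mul m i

theorem three_pow_lt_two_pow_sum_collatzExp (hm : 0 < m) (hk : 0 < k)
    (hcyc : IsPeriodicPt collatzOdd k m) : (3 : ℕ) ^ k < 2 ^ (∑ i ∈ range k, collatzExp m i) := by
  have hpos := iterate_collatzOdd_pos hm
  have hlt : (3 : ℤ) ^ k * ∏ i ∈ range k, collatzOdd^[i] m <
      2 ^ (∑ i ∈ range k, collatzExp m i) * ∏ i ∈ range k, collatzOdd^[i] m := by
    rw [two_pow_sum_collatzExp_mul_prod hcyc]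
    calc (3 : ℤ) ^ k * ∏ i ∈ range k, collatzOdd^[i] m = ∏ i ∈ range k, 3 * collatzOdd^[i] m := by
          rw [prod_mul_distrib, prod_const, card_range]
      _ < _ := prod_lt_prod_of_nonempty (fun i _ ↦ by linarith [hpos i]) (fun _ _ ↦ by linarith)
          (nonempty_range_iff.mpr hk.ne')
  exact_mod_cast lt_of_mul_lt_mul_right hlt (prod_pos fun i _ ↦ hpos i).le

theorem pow_mul_two_pow_sum_collatzExp_le (hm : 0 < m) (hcyc : IsPeriodicPt collatzOdd k m)
    (hmin : ∀ i, m ≤ collatzOdd^[i] m) :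
    m ^ k * 2 ^ (∑ i ∈ range k, collatzExp m i) ≤ (3 * m + 1) ^ k := by
  have hpos := iterate_collatzOdd_pos hm
  have hle : ∏ i ∈ range k, (m * (3 * collatzOdd^[i] m + 1)) ≤
      ∏ i ∈ range k, ((3 * m + 1) * collatzOdd^[i] m) :=
    prod_le_prod (fun i _ ↦ by nlinarith [hpos i]) (fun i _ ↦ by nlinarith [hmin i, hpos i])
  rw [prod_mul_distrib, prod_mul_distrib, prod_const, prod_const, card_range,
    ← two_pow_sum_collatzExp_mul_prod hcyc, ← mul_assoc] at hle
  exact le_of_mul_le_mul_right hle (prod_pos fun i _ ↦ hpos i)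

theorem lt_mul_three_pow_of_isPeriodicPt (hm : 0 < m) (hk : 2 ≤ k)
    (hcyc : IsPeriodicPt collatzOdd k m) (hmin : ∀ i, m ≤ collatzOdd^[i] m) :
    m < k * 3 ^ (k - 1) := by
  have hlt := three_pow_lt_two_pow_sum_collatzExp hm (by omega) hcyc
  set N := ∑ i ∈ range k, collatzExp m i
  have hN : (3 : ℤ) ^ k + 2 ≤ 2 ^ N := by
    have := Nat.three_pow_add_one_ne_two_pow hk N
    have : 3 ^ k + 2 ≤ 2 ^ N := by omega
    exact_mod_cast this
  refine lt_mul_three_pow_of_pow_mul_le hm ?_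
  calc m ^ k * (3 ^ k + 2) ≤ m ^ k * 2 ^ N := by gcongr
    _ ≤ (3 * m + 1) ^ k := pow_mul_two_pow_sum_collatzExp_le hm hcyc hmin

end Cycle

theorem collatzOdd_search_bound (k : ℕ) (hk : 2 ≤ k)
    (hex : ∃ a : ℤ, 0 < a ∧ Odd a ∧ collatzOdd^[k] a = a ∧
      ∀ i : ℕ, 0 < i → i < k → collatzOdd^[i] a ≠ a) :
    ∃ a : ℤ, 0 < a ∧ Odd a ∧ a < k * 3 ^ (k - 1) ∧ collatzOdd^[k] a = a ∧
      ∀ i : ℕ, 0 < i → i < k → collatzOdd^[i] a ≠ a := by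
  obtain ⟨a, ha, hodd, hcyc⟩ := hex
  have hk0 : 0 < k := by omega
  have hper : minimalPeriod collatzOdd a = k := (minimalPeriod_eq_iff_of_pos hk0).mpr hcyc
  obtain ⟨j, hj⟩ := IsPeriodicPt.exists_iterate_le hcyc.1 hk0
  set m := collatzOdd^[j] a
  have hmper : minimalPeriod collatzOdd m = k := by
    rw [minimalPeriod_apply_iterate (mk_mem_periodicPts hk0 hcyc.1), hper]
  have hmcyc := (minimalPeriod_eq_iff_of_pos hk0).mp hmper
  have hmin : ∀ i, m ≤ collatzOdd^[i] m := fun i ↦ by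
    rw [← iterate_add_apply]; exact hj _
  exact ⟨m, iterate_collatzOdd_pos ha j, Iterate.rec Odd hodd (fun b _ ↦ odd_collatzOdd b) j,
    lt_mul_three_pow_of_isPeriodicPt (iterate_collatzOdd_pos ha j) hk hmcyc.1 hmin, hmcyc⟩
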